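/- Let v₁, v₂ ∈ ℍ(ℚ) be linearly independent over ℚ, let L be their ℚ-span, set a₁ = a₁(v₁,v₂), a₂ = a₂(v₁,v₂), and let g ∈ ℍ(ℚ) be nonzero with a₂·g = g·a₁. Let α, β ∈ ℍ(ℚ) satisfy Nr(α) = Nr(β) = 1. Then α·x·conj β = x for all x ∈ L if and only if α·a₁ = a₁·α and β·g = g·α. -/

import Mathlib

/-!
Every `x` in the span `L` of `v₁, v₂` intertwines `a₂` with `a₁`: `x a₂ = a₁ x`. As
`a₂ g = g a₁`, each `x g` commutes with `a₁`, a pure quaternion that is nonzero by linear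
independence. The centralizer of a nonzero pure quaternion `p` is the commutative field
`ℚ + ℚ p`. So once `α` commutes with `a₁`, it commutes with every `x g`, and
`α x g = x g α = x β g` gives `α x conj β = x`. Conversely, `α x = x β` on `L` makes `α`
commute with `v₁ conj v₂`, hence with `a₁`, and then with `v₂ g`, which yields
`v₂ β g = v₂ g α`.
-/

namespace Quaternion

section CommRing

variable {R : Type*} [CommRing R]

theorem re_mul_comm (a b : ℍ[R]) : (a * b).re = (b * a).re := by
  simp only [re_mul]
  ring

theorem semiconjBy_im {x q q' : ℍ[R]} (h : SemiconjBy x q q') (hre : q.re = q'.re) :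
    SemiconjBy x q.im q'.im := by
  rw [eq_sub_of_add_eq' q.re_add_im, eq_sub_of_add_eq' q'.re_add_im, hre]
  exact h.sub_right (coe_commute _ x).symm

theorem semiconjBy_im_of_mem_span {v w x : ℍ[R]} (hx : x ∈ Submodule.span R {v, w}) :
    SemiconjBy x (star w * v).im (v * star w).im := by
  induction hx using Submodule.span_induction with
  | mem x hx =>
    refine semiconjBy_im ?_ (re_mul_comm _ _)
    rcases hx with rfl | rfl
    · exact (mul_assoc _ _ _).symm
    · rw [SemiconjBy, ← mul_assoc, self_mul_star, mul_assoc, star_mul_self, coe_mul_eq_smul,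
        mul_coe_eq_smul]
  | zero => exact SemiconjBy.zero_left _ _
  | add x y _ _ hx hy => exact hx.add_left hy
  | smul r x _ hx => exact hx.smul_left r

end CommRing

section OrderedField

variable {R : Type*} [Field R] [LinearOrder R] [IsStrictOrderedRing R]

theorem mul_mul_star_eq_self_iff {α β x : ℍ[R]} (hβ : normSq β = 1) :
    α * x * star β = x ↔ α * x = x * β := by
  constructor
  · intro h
    calc α * x = α * x * star β * β := by
          rw [mul_assoc _ (star β), star_mul_self, hβ, coe_one, mul_one]
      _ = x * β := by rw [h]
  · intro h
    rw [h, mul_assoc, self_mul_star, hβ, coe_one, mul_one]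

theorem im_mul_star_ne_zero {v w : ℍ[R]} (h : LinearIndependent R ![v, w]) :
    (v * star w).im ≠ 0 := by
  intro him
  obtain ⟨r, hr⟩ : ∃ r : R, v * star w = r :=
    ⟨_, by conv_lhs => rw [← re_add_im (v * star w), him, add_zero]⟩
  have hdep : normSq w • v + (-r) • w = 0 := by
    rw [neg_smul, ← mul_coe_eq_smul, ← star_mul_self, ← mul_assoc, hr, coe_mul_eq_smul,
      add_neg_cancel]
  exact h.ne_zero 1 (normSq_eq_zero.1 (LinearIndependent.pair_iff.1 h _ _ hdep).1)

theorem exists_im_eq_smul_of_commute {p x : ℍ[R]} (hp : p.re = 0) (hp0 : p ≠ 0)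
    (h : Commute x p) : ∃ c : R, x.im = c • p := by
  have hcomm : Commute p x.im := semiconjBy_im h.symm rfl
  -- the product of two commuting pure quaternions is real
  obtain ⟨r, hr⟩ : ∃ r : R, x.im * p = r := by
    refine ⟨_, star_eq_self.1 ?_⟩
    rw [star_mul, star_eq_neg.2 hp, star_eq_neg.2 x.re_im, neg_mul_neg, hcomm.eq]
  have hsq : p * p = -((normSq p : R) : ℍ[R]) := by
    rw [← self_mul_star, star_eq_neg.2 hp, mul_neg, neg_neg]
  have hN : normSq p ≠ 0 := normSq_ne_zero.2 hp0
  refine ⟨-r / normSq p, smul_right_injective _ hN ?_⟩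
  calc normSq p • x.im = -(x.im * (p * p)) := by rw [hsq, mul_neg, neg_neg, mul_coe_eq_smul]
    _ = normSq p • ((-r / normSq p) • p) := by
      rw [← mul_assoc, hr, coe_mul_eq_smul, smul_smul, mul_div_cancel₀ _ hN, neg_smul]

theorem commute_of_commute_of_re_eq_zero {p x y : ℍ[R]} (hp : p.re = 0) (hp0 : p ≠ 0)
    (hx : Commute x p) (hy : Commute y p) : Commute x y := by
  obtain ⟨c, hc⟩ := exists_im_eq_smul_of_commute hp hp0 hx
  obtain ⟨d, hd⟩ := exists_im_eq_smul_of_commute hp hp0 hy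
  rw [← x.re_add_im, ← y.re_add_im, hc, hd]
  refine (coe_commute _ _).add_left ((coe_commute _ _).symm.add_right ?_)
  exact ((Commute.refl p).smul_left c).smul_right d

end OrderedField

end Quaternion

open Quaternion

/-- Let `v₁, v₂ ∈ ℍ(ℚ)` be linearly independent with `ℚ`-span `L`, put
`a₁ = Im(v₁ conj v₂)`, `a₂ = Im(conj v₂ * v₁)`, and let `g ≠ 0` satisfy `a₂ g = g a₁`.
If `Nr α = Nr β = 1`, then `α x conj β = x` for all `x ∈ L` iff
`α a₁ = a₁ α` and `β g = g α`. -/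
theorem stmt_5 (v₁ v₂ : ℍ[ℚ]) (hli : LinearIndependent ℚ ![v₁, v₂])
    (g : ℍ[ℚ]) (hg : g ≠ 0)
    (hg2 : (star v₂ * v₁).im * g = g * (v₁ * star v₂).im)
    (α β : ℍ[ℚ]) (hα : Quaternion.normSq α = 1) (hβ : Quaternion.normSq β = 1) :
    (∀ x ∈ Submodule.span ℚ ({v₁, v₂} : Set ℍ[ℚ]), α * x * star β = x) ↔
      (α * (v₁ * star v₂).im = (v₁ * star v₂).im * α ∧ β * g = g * α) := by
  have commute_mul : ∀ x ∈ Submodule.span ℚ ({v₁, v₂} : Set ℍ[ℚ]),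
      Commute α (v₁ * star v₂).im → Commute α (x * g) := fun x hx hαa =>
    commute_of_commute_of_re_eq_zero (re_im _) (im_mul_star_ne_zero hli) hαa
      ((semiconjBy_im_of_mem_span hx).mul_left hg2.symm)
  have hv₁ : v₁ ∈ Submodule.span ℚ ({v₁, v₂} : Set ℍ[ℚ]) :=
    Submodule.subset_span (by simp)
  have hv₂ : v₂ ∈ Submodule.span ℚ ({v₁, v₂} : Set ℍ[ℚ]) :=
    Submodule.subset_span (by simp)
  constructor
  · intro h
    have h₁ : α * v₁ = v₁ * β := (mul_mul_star_eq_self_iff hβ).1 (h v₁ hv₁)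
    have h₂ : α * v₂ = v₂ * β := (mul_mul_star_eq_self_iff hβ).1 (h v₂ hv₂)
    have h₂' : β * star v₂ = star v₂ * α := by
      refine (mul_mul_star_eq_self_iff hα).1 ?_
      simpa only [star_mul, star_star, mul_assoc] using congrArg star (h v₂ hv₂)
    have hαa : Commute α (v₁ * star v₂).im :=
      semiconjBy_im (SemiconjBy.mul_left h₁.symm h₂'.symm).symm rfl
    refine ⟨hαa, mul_left_cancel₀ (hli.ne_zero 1) ?_⟩
    calc v₂ * (β * g) = α * (v₂ * g) := by rw [← mul_assoc, ← mul_assoc, h₂]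
      _ = v₂ * (g * α) := by rw [(commute_mul v₂ hv₂ hαa).eq, mul_assoc]
  · rintro ⟨hαa, hβg⟩ x hx
    refine (mul_mul_star_eq_self_iff hβ).2 (mul_right_cancel₀ hg ?_)
    rw [mul_assoc, (commute_mul x hx hαa).eq, mul_assoc, mul_assoc, hβg]
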